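/- Let π be an indecomposable 132-avoiding permutation and let λ = Λ(π) be the partition given by its Lehmer code (with the convention λ_i = 0 for indices beyond the number of parts). Then π avoids the pattern 4231 if and only if there do not exist indices i < j with λ_i ≥ λ_{i+1} + 2 and λ_j = λ_{j+1} > 0; equivalently, if λ_i ≥ λ_{i+1} + 2 for some i, then the positive parts of λ with index greater than i are strictly decreasing. -/

import Mathlib

/-- A permutation `π` of length `n` (as a bijection of `Fin n`, position `i` has value `π i`)
contains the pattern `p` of length `m` if some subsequence of `π` is order-isomorphic to `p`. -/
def Contains {n m : ℕ} (π : Equiv.Perm (Fin n)) (p : Equiv.Perm (Fin m)) : Prop :=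
  ∃ f : Fin m → Fin n, StrictMono f ∧ ∀ a b : Fin m, π (f a) < π (f b) ↔ p a < p b

/-- `π` avoids the pattern `p`. -/
def Avoids {n m : ℕ} (π : Equiv.Perm (Fin n)) (p : Equiv.Perm (Fin m)) : Prop :=
  ¬ Contains π p

/-- The number of inversions of `π`: pairs of positions `i < j` with `π i > π j`. -/
noncomputable def invCount {n : ℕ} (π : Equiv.Perm (Fin n)) : ℕ :=
  Nat.card {ij : Fin n × Fin n // ij.1 < ij.2 ∧ π ij.2 < π ij.1}

/-- The pattern 132. -/
def p132 : Equiv.Perm (Fin 3) := ⟨![0,2,1], ![0,2,1], by decide, by decide⟩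

/-- `π` is indecomposable: it is not the direct sum of two nonempty permutations,
i.e. there is no `0 < d < n` such that the first `d` positions carry the values `0, …, d-1`. -/
def Indecomposable {n : ℕ} (π : Equiv.Perm (Fin n)) : Prop :=
  ¬ ∃ d : ℕ, 0 < d ∧ d < n ∧ ∀ i : Fin n, (i : ℕ) < d → (π i : ℕ) < d

/-- The Lehmer code of `π` at position `i`: the number of positions `j > i` with
`π j < π i`.  For an indecomposable `132`-avoiding permutation the Lehmer code is
weakly decreasing and its nonzero entries form the partition `Λ(π)` of `inv(π)`. -/
noncomputable def lehmer {n : ℕ} (π : Equiv.Perm (Fin n)) (i : Fin n) : ℕ :=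
  Nat.card {j : Fin n // i < j ∧ π j < π i}

/-- The Lehmer code of `π`, extended by zeroes beyond position `n`; for an indecomposable
`132`-avoider this is exactly the partition `λ = Λ(π)` with the convention `λ_i = 0` for
indices `i` beyond the number of parts (indices are 0-based here). -/
noncomputable def lehmerExt {n : ℕ} (π : Equiv.Perm (Fin n)) (i : ℕ) : ℕ :=
  if h : i < n then lehmer π ⟨i, h⟩ else 0

def p4231 : Equiv.Perm (Fin 4) := ⟨![3,1,2,0], ![3,1,2,0], by decide, by decide⟩

/-!
For a 132-avoider the Lehmer code records the local shape of `π`: at adjacent positions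
`i, i + 1` it drops by at least two exactly when a later entry lies strictly between `π (i + 1)`
and `π i`, and it stays constant exactly at an ascent. An occurrence of 4231 at `a < b < c < d`
therefore gives such a drop where the entries cross below `π c` between `a` and `b`, and a plateau
(with positive code, because of `d`) where they cross above `π b` between `b` and `c`. Conversely,
a drop at `i` with witness `w` followed by a positive plateau at `j` yields 4231, either as
`i, i + 1, w` followed by a smaller entry or as `i, j, j + 1` followed by one; in every other
arrangement a 132 appears.
-/

open Finset

theorem contains_of_strictMono {n m : ℕ} (π : Equiv.Perm (Fin n)) {p : Equiv.Perm (Fin m)}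
    {f g : Fin m → Fin n} (hf : StrictMono f) (hg : StrictMono g)
    (hfg : ∀ a, π (f a) = g (p a)) : Contains π p :=
  ⟨f, hf, fun a b => by rw [hfg, hfg, hg.lt_iff_lt]⟩

variable {n : ℕ} {π : Equiv.Perm (Fin n)}

theorem Avoids.lt_of_p132 (h : Avoids π p132) {x y z : Fin n} (hxy : x < y) (hyz : y < z)
    (hzy : π z < π y) : π z < π x := by
  refine lt_of_le_of_ne (not_lt.1 fun hxz => h ?_) (π.injective.ne (hxy.trans hyz).ne')
  refine contains_of_strictMono π (f := ![x, y, z]) (g := ![π x, π z, π y]) ?_ ?_ ?_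
  · simp [hxy, hyz]
  · simp [hxz, hzy]
  · intro a; fin_cases a <;> rfl

theorem contains_p4231_of_lt {x y z w : Fin n} (hxy : x < y) (hyz : y < z) (hzw : z < w)
    (hwy : π w < π y) (hyz' : π y < π z) (hzx : π z < π x) : Contains π p4231 :=
  contains_of_strictMono π (f := ![x, y, z, w]) (g := ![π w, π y, π z, π x])
    (by simp [hxy, hyz, hzw]) (by simp [hwy, hyz', hzx]) (by intro a; fin_cases a <;> rfl)

theorem Avoids.contains_p4231_of_p132 (h : Avoids π p132) {x y z t : Fin n} (hxy : x < y)
    (hyz : y < z) (hzt : z < t) (hyz' : π y < π z) (hzx : π z < π x) (htz : π t < π z) :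
    Contains π p4231 :=
  contains_p4231_of_lt hxy hyz hzt (h.lt_of_p132 hyz hzt htz) hyz' hzx

theorem Nat.exists_crossing {P : ℕ → Prop} {a b : ℕ} (hab : a ≤ b) (ha : P a) (hb : ¬ P b) :
    ∃ k, a ≤ k ∧ k < b ∧ P k ∧ ¬ P (k + 1) := by
  induction b, hab using Nat.le_induction with
  | base => exact absurd ha hb
  | succ b hab ih =>
    by_cases hPb : P b
    · exact ⟨b, hab, b.lt_succ_self, hPb, hb⟩
    · obtain ⟨k, hak, hkb, hk⟩ := ih hPb
      exact ⟨k, hak, hkb.trans b.lt_succ_self, hk⟩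

theorem Fin.exists_crossing {P : Fin n → Prop} {a b : Fin n} (hab : a ≤ b) (ha : P a)
    (hb : ¬ P b) : ∃ i j : Fin n, a ≤ i ∧ j ≤ b ∧ (i : ℕ) + 1 = j ∧ P i ∧ ¬ P j := by
  obtain ⟨k, hak, hkb, ⟨hk, hPk⟩, hk'⟩ :=
    Nat.exists_crossing (P := fun k => ∃ h : k < n, P ⟨k, h⟩) hab ⟨a.isLt, ha⟩
      (fun ⟨_, h⟩ => hb h)
  have hk1 : k + 1 < n := by omega
  exact ⟨⟨k, hk⟩, ⟨k + 1, hk1⟩, hak, Nat.succ_le_of_lt hkb, rfl, hPk, fun h => hk' ⟨hk1, h⟩⟩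

variable (π) in
def lehmerSet (i : Fin n) : Finset (Fin n) := {j | i < j ∧ π j < π i}

@[simp]
theorem mem_lehmerSet {i j : Fin n} : j ∈ lehmerSet π i ↔ i < j ∧ π j < π i := by
  simp [lehmerSet]

theorem lehmer_eq_card (i : Fin n) : lehmer π i = #(lehmerSet π i) := by
  rw [lehmer, Nat.card_eq_fintype_card, Fintype.card_subtype]
  rfl

theorem lehmer_pos_iff {i : Fin n} : 0 < lehmer π i ↔ ∃ j, i < j ∧ π j < π i := by
  simp [lehmer_eq_card, Finset.card_pos, Finset.Nonempty]

theorem insert_lehmerSet_subset {i j : Fin n} (hij : i < j) (hji : π j < π i) :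
    insert j (lehmerSet π j) ⊆ lehmerSet π i := by
  intro u hu
  rcases mem_insert.1 hu with rfl | hu
  · simp [hij, hji]
  · rw [mem_lehmerSet] at hu ⊢
    exact ⟨hij.trans hu.1, hu.2.trans hji⟩

theorem card_insert_lehmerSet (i : Fin n) : #(insert i (lehmerSet π i)) = lehmer π i + 1 := by
  rw [card_insert_of_notMem (by simp), lehmer_eq_card]

theorem lehmer_add_two_le_iff {i j : Fin n} (hij : (i : ℕ) + 1 = j) :
    lehmer π j + 2 ≤ lehmer π i ↔ ∃ w, j < w ∧ π j < π w ∧ π w < π i := by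
  have hij' : i < j := by omega
  constructor
  · intro hle
    by_contra! hno
    have hsub : lehmerSet π i ⊆ insert j (lehmerSet π j) := by
      intro u hu
      rw [mem_lehmerSet] at hu
      rcases eq_or_ne u j with rfl | hne
      · exact mem_insert_self _ _
      have hju : j < u := by omega
      refine mem_insert_of_mem (mem_lehmerSet.2 ⟨hju, ?_⟩)
      exact lt_of_le_of_ne (not_lt.1 fun h => (hno u hju h).not_gt hu.2) (π.injective.ne hne)
    have := card_le_card hsub
    rw [card_insert_lehmerSet, ← lehmer_eq_card] at this
    omega
  · rintro ⟨w, hjw, hjw', hwi⟩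
    have hsub := insert_lehmerSet_subset hij' (hjw'.trans hwi)
    have hlt : insert j (lehmerSet π j) ⊂ lehmerSet π i :=
      (ssubset_iff_of_subset hsub).2 ⟨w, by simp [hij'.trans hjw, hwi], by simp [hjw.ne', hjw'.le]⟩
    have := card_lt_card hlt
    rw [card_insert_lehmerSet, ← lehmer_eq_card] at this
    omega

theorem Avoids.lehmer_eq_iff_of_p132 (h : Avoids π p132) {i j : Fin n} (hij : (i : ℕ) + 1 = j) :
    lehmer π i = lehmer π j ↔ π i < π j := by
  have hij' : i < j := by omega
  constructor
  · intro heq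
    refine lt_of_le_of_ne (not_lt.1 fun hji => ?_) (π.injective.ne hij'.ne)
    have := card_le_card (insert_lehmerSet_subset hij' hji)
    rw [card_insert_lehmerSet, ← lehmer_eq_card] at this
    omega
  · intro hasc
    rw [lehmer_eq_card, lehmer_eq_card]
    congr 1
    ext u
    simp only [mem_lehmerSet]
    constructor
    · rintro ⟨hiu, hui⟩
      have hne : u ≠ j := fun h => (hui.trans hasc).ne (congrArg π h)
      exact ⟨by omega, hui.trans hasc⟩
    · rintro ⟨hju, huj⟩
      exact ⟨hij'.trans hju, h.lt_of_p132 hij' hju huj⟩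

theorem lehmerExt_val (i : Fin n) : lehmerExt π i = lehmer π i :=
  dif_pos i.isLt

theorem add_one_lt_of_lehmerExt_pos {k : ℕ} (hk : 0 < lehmerExt π k) : k + 1 < n := by
  by_cases hkn : k < n
  · obtain ⟨j, hkj, -⟩ := lehmer_pos_iff.1 (hk.trans_eq (lehmerExt_val ⟨k, hkn⟩))
    exact (Nat.succ_le_of_lt hkj).trans_lt j.isLt
  · simp [lehmerExt, hkn] at hk

theorem Avoids.exists_drop_plateau_of_contains_p4231 (h : Avoids π p132)
    (hc : Contains π p4231) :
    ∃ i j : ℕ, i < j ∧ lehmerExt π (i + 1) + 2 ≤ lehmerExt π i ∧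
      lehmerExt π j = lehmerExt π (j + 1) ∧ 0 < lehmerExt π j := by
  obtain ⟨f, hf, hfp⟩ := hc
  have hab : f 0 < f 1 := hf (by decide)
  have hbc : f 1 < f 2 := hf (by decide)
  have hcd : f 2 < f 3 := hf (by decide)
  have hca : π (f 2) < π (f 0) := (hfp 2 0).2 (by decide)
  have hbc' : π (f 1) < π (f 2) := (hfp 1 2).2 (by decide)
  have hdb : π (f 3) < π (f 1) := (hfp 3 1).2 (by decide)
  obtain ⟨i, i', -, hi'b, hii', hi, hi'⟩ :=
    Fin.exists_crossing (P := fun k => π (f 2) < π k) hab.le hca hbc'.asymm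
  obtain ⟨j, j', hbj, hj'c, hjj', hj, hj'⟩ :=
    Fin.exists_crossing (P := fun k => π k ≤ π (f 1)) hbc.le le_rfl (not_le.2 hbc')
  have hdrop : lehmer π i' + 2 ≤ lehmer π i := by
    refine (lehmer_add_two_le_iff hii').2 ⟨f 2, hi'b.trans_lt hbc, ?_, hi⟩
    exact lt_of_le_of_ne (not_lt.1 hi') (π.injective.ne (hi'b.trans_lt hbc).ne)
  have hplat : lehmer π j = lehmer π j' :=
    (h.lehmer_eq_iff_of_p132 hjj').2 (hj.trans_lt (not_le.1 hj'))
  have hpos : 0 < lehmer π j := by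
    have hjc : j < f 2 := by omega
    exact lehmer_pos_iff.2 ⟨f 3, hjc.trans hcd, h.lt_of_p132 hjc hcd (hdb.trans hbc')⟩
  refine ⟨i, j, by omega, ?_, ?_, ?_⟩
  · rwa [hii', lehmerExt_val, lehmerExt_val]
  · rwa [hjj', lehmerExt_val, lehmerExt_val]
  · rwa [lehmerExt_val]

theorem Avoids.contains_p4231_of_drop_plateau (h : Avoids π p132) {i j : ℕ} (hij : i < j)
    (hdrop : lehmerExt π (i + 1) + 2 ≤ lehmerExt π i)
    (hplat : lehmerExt π j = lehmerExt π (j + 1)) (hpos : 0 < lehmerExt π j) :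
    Contains π p4231 := by
  have hi : i + 1 < n := add_one_lt_of_lehmerExt_pos (π := π) (by omega)
  have hj : j + 1 < n := add_one_lt_of_lehmerExt_pos hpos
  obtain ⟨I, rfl⟩ : ∃ I : Fin n, (I : ℕ) = i := ⟨⟨i, by omega⟩, rfl⟩
  obtain ⟨I', hII'⟩ : ∃ I' : Fin n, (I : ℕ) + 1 = I' := ⟨⟨I + 1, hi⟩, rfl⟩
  obtain ⟨J, rfl⟩ : ∃ J : Fin n, (J : ℕ) = j := ⟨⟨j, by omega⟩, rfl⟩
  obtain ⟨J', hJJ'⟩ : ∃ J' : Fin n, (J : ℕ) + 1 = J' := ⟨⟨J + 1, hj⟩, rfl⟩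
  rw [hII', lehmerExt_val, lehmerExt_val] at hdrop
  rw [hJJ', lehmerExt_val, lehmerExt_val] at hplat
  rw [lehmerExt_val] at hpos
  obtain ⟨w, hI'w, hI'w', hwI⟩ := (lehmer_add_two_le_iff hII').1 hdrop
  have hasc : π J < π J' := (h.lehmer_eq_iff_of_p132 hJJ').1 hplat
  obtain ⟨d, hJd, hdJ⟩ := lehmer_pos_iff.1 hpos
  rcases le_or_gt w J with hwJ | hJw
  · -- the 312 at `(I, I', w)` is completed to 4231 by `d`
    have hdw : π d < π w := by
      rcases hwJ.eq_or_lt with rfl | hwJ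
      · exact hdJ
      · exact h.lt_of_p132 hwJ hJd hdJ
    exact h.contains_p4231_of_p132 (by omega) hI'w (hwJ.trans_lt hJd) hI'w' hwI hdw
  rcases lt_or_gt_of_ne (π.injective.ne (show I ≠ J' by omega)) with hIJ' | hJ'I
  · -- `(I', J', w)` would be a 132
    have hJ'w : J' < w := lt_of_le_of_ne (by omega) fun he => by
      rw [he] at hIJ'; exact hIJ'.not_gt hwI
    exact absurd (h.lt_of_p132 (show I' < J' by omega) hJ'w (hwI.trans hIJ')) hI'w'.asymm
  · have hJ'd : J' < d := lt_of_le_of_ne (by omega) fun he => by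
      rw [he] at hasc; exact hasc.not_gt hdJ
    exact h.contains_p4231_of_p132 (by omega) (by omega) hJ'd hasc hJ'I (hdJ.trans hasc)

theorem avoids_4231_iff_general (n : ℕ) (π : Equiv.Perm (Fin n))
    (h132 : Avoids π p132) :
    Avoids π p4231 ↔
      ¬ ∃ i j : ℕ, i < j ∧ lehmerExt π (i + 1) + 2 ≤ lehmerExt π i ∧
        lehmerExt π j = lehmerExt π (j + 1) ∧ 0 < lehmerExt π j := by
  refine not_congr ⟨h132.exists_drop_plateau_of_contains_p4231, ?_⟩
  rintro ⟨i, j, hij, hdrop, hplat, hpos⟩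
  exact h132.contains_p4231_of_drop_plateau hij hdrop hplat hpos

/-- Let `π` be an indecomposable 132-avoiding permutation and `λ = Λ(π)` the partition
given by its Lehmer code (here `lehmerExt π`, with `λ_i = 0` beyond the parts).  Then `π`
avoids 4231 if and only if there are no indices `i < j` with `λ_i ≥ λ_{i+1} + 2` and
`λ_j = λ_{j+1} > 0` (equivalently: after any gap of size at least two, the positive parts
are strictly decreasing). -/
theorem avoids_4231_iff (n : ℕ) (π : Equiv.Perm (Fin n))
    (hind : Indecomposable π) (h132 : Avoids π p132) :
    Avoids π p4231 ↔
      ¬ ∃ i j : ℕ, i < j ∧ lehmerExt π (i + 1) + 2 ≤ lehmerExt π i ∧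
        lehmerExt π j = lehmerExt π (j + 1) ∧ 0 < lehmerExt π j :=
  avoids_4231_iff_general n π h132
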